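/- Let {(U_{i1},…,U_{id})}_{i=1}^n be an i.i.d. sample from the probability measure on [0,1]^d with the extended FGM density c (parameters λ^(k)_M satisfying the admissibility constraint). For each k ∈ {1,2} and each M ⊆ {1,…,d} with |M| ≥ 2, the estimator λ̂^(k)_M = (1/n) ∑_{i=1}^n ∏_{m ∈ M} φ_k(U_{im}) is consistent: λ̂^(k)_M converges in probability to λ^(k)_M as n → ∞. -/

import Mathlib

/-!
Write `X = ∏_{m ∈ M} φ_k(U_m)`. Expanding the density `c`, the integral of `X` against the FGM
law becomes a sum of integrals against the uniform law on `[0,1]^d`; each factorises over the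
coordinates, and since `φ₁, φ₂` are centred and orthonormal in `L²[0,1]`, only the term of
`λ^(k)_M` survives, so `E X = λ^(k)_M`. Admissibility is what makes `c ≥ 0`, so that the
measure really has density `c`. The summands `X_i` are bounded and i.i.d., so the strong law of
large numbers gives almost sure, hence in-probability, convergence of their average.
-/

open MeasureTheory ProbabilityTheory Real Finset

/-- The shifted Legendre-type functions: `φ₁(x) = √3 (2x − 1)` and
`φ₂(x) = √5 (6x² − 6x + 1)`. -/
noncomputable def phiFGM (k : ℕ) (x : ℝ) : ℝ :=
  if k = 1 then Real.sqrt 3 * (2 * x - 1) else Real.sqrt 5 * (6 * x ^ 2 - 6 * x + 1)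

/-- Antiderivatives: `Φ₁(x) = √3 (x² − x)` and `Φ₂(x) = √5 (2x³ − 3x² + x)`. -/
noncomputable def PhiFGM (k : ℕ) (x : ℝ) : ℝ :=
  if k = 1 then Real.sqrt 3 * (x ^ 2 - x) else Real.sqrt 5 * (2 * x ^ 3 - 3 * x ^ 2 + x)

/-- The density of the extended `d`-variate FGM copula with parameters `lam k M`:
`c(u) = 1 + ∑_{k=1}^2 ∑_{M ⊆ {1,…,d}, |M| ≥ 2} λ^(k)_M ∏_{m ∈ M} φ_k(u_m)`. -/
noncomputable def fgmDensity (d : ℕ) (lam : ℕ → Finset (Fin d) → ℝ) (u : Fin d → ℝ) : ℝ :=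
  1 + ∑ k ∈ Finset.Icc 1 2, ∑ M ∈ Finset.univ.powerset.filter (fun M : Finset (Fin d) => 2 ≤ M.card),
      lam k M * ∏ m ∈ M, phiFGM k (u m)

/-- The admissibility constraint
`∑_{j=2}^d [ (√3)^j ∑_{|M|=j} |λ^(1)_M| + (√5)^j ∑_{|M|=j} |λ^(2)_M| ] ≤ 1`. -/
def fgmAdmissible (d : ℕ) (lam : ℕ → Finset (Fin d) → ℝ) : Prop :=
  ∑ M ∈ Finset.univ.powerset.filter (fun M : Finset (Fin d) => 2 ≤ M.card),
      (Real.sqrt 3 ^ M.card * |lam 1 M| + Real.sqrt 5 ^ M.card * |lam 2 M|) ≤ 1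

/-- The probability measure on `[0,1]^d` with density `c`: the uniform measure on the
unit cube reweighted by the extended FGM copula density. -/
noncomputable def fgmMeasure (d : ℕ) (lam : ℕ → Finset (Fin d) → ℝ) :
    Measure (Fin d → ℝ) :=
  (Measure.pi fun _ : Fin d => volume.restrict (Set.Icc (0:ℝ) 1)).withDensity
    fun u => ENNReal.ofReal (fgmDensity d lam u)

instance : IsProbabilityMeasure ((volume : Measure ℝ).restrict (Set.Icc 0 1)) :=
  ⟨by simp⟩

theorem ae_forall_mem_of_pi_restrict {ι α : Type*} [Fintype ι] [MeasurableSpace α]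
    (ν : Measure α) [SigmaFinite ν] {s : Set α} (hs : MeasurableSet s) :
    ∀ᵐ u ∂Measure.pi (fun _ : ι => ν.restrict s), ∀ i, u i ∈ s :=
  ae_all_iff.2 fun _ => Measure.tendsto_eval_ae_ae.eventually (ae_restrict_mem hs)

theorem integral_pi_prod_mul_prod {ι α : Type*} [Fintype ι] [DecidableEq ι] [MeasurableSpace α]
    (ν : Measure α) [IsProbabilityMeasure ν] {f g : α → ℝ}
    (hf : ∫ x, f x ∂ν = 0) (hg : ∫ x, g x ∂ν = 0) (S T : Finset ι) :
    ∫ u, (∏ i ∈ S, f (u i)) * ∏ i ∈ T, g (u i) ∂Measure.pi (fun _ => ν)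
      = if S = T then (∫ x, f x * g x ∂ν) ^ S.card else 0 := by
  have htensor : ∀ u : ι → α, (∏ i ∈ S, f (u i)) * ∏ i ∈ T, g (u i)
      = ∏ i, (if i ∈ S then f (u i) else 1) * (if i ∈ T then g (u i) else 1) := by
    intro u
    rw [prod_mul_distrib, prod_ite_mem, prod_ite_mem, univ_inter, univ_inter]
  simp_rw [htensor]
  rw [integral_fintype_prod_eq_prod fun i x =>
    (if i ∈ S then f x else 1) * (if i ∈ T then g x else 1)]
  split_ifs with hST
  · subst hST
    rw [← prod_const, ← univ_inter S, ← prod_ite_mem]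
    refine prod_congr rfl fun i _ => ?_
    by_cases hi : i ∈ S <;> simp [hi]
  · obtain ⟨i, hi⟩ : ∃ i, ¬(i ∈ S ↔ i ∈ T) := by
      by_contra! h
      exact hST (Finset.ext h)
    refine prod_eq_zero (mem_univ i) ?_
    by_cases hS : i ∈ S <;> by_cases hT : i ∈ T <;> simp_all

theorem integral_Icc_zero_one_eq_intervalIntegral (f : ℝ → ℝ) :
    ∫ x in Set.Icc (0:ℝ) 1, f x = ∫ x in (0:ℝ)..1, f x := by
  rw [intervalIntegral.integral_of_le zero_le_one, integral_Icc_eq_integral_Ioc]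

theorem continuous_phiFGM (k : ℕ) : Continuous (phiFGM k) := by
  unfold phiFGM; split_ifs <;> fun_prop

theorem hasDerivAt_PhiFGM (k : ℕ) (x : ℝ) : HasDerivAt (PhiFGM k) (phiFGM k x) x := by
  unfold PhiFGM phiFGM
  split_ifs
  · exact (((hasDerivAt_pow 2 x).fun_sub (hasDerivAt_id' x)).const_mul √3).congr_deriv
      (by norm_num)
  · exact ((((hasDerivAt_pow 3 x).const_mul 2).fun_sub ((hasDerivAt_pow 2 x).const_mul 3)).fun_add
      (hasDerivAt_id' x)).const_mul √5 |>.congr_deriv (by norm_num; ring)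

theorem integral_phiFGM (k : ℕ) : ∫ x in Set.Icc (0:ℝ) 1, phiFGM k x = 0 := by
  rw [integral_Icc_zero_one_eq_intervalIntegral, intervalIntegral.integral_eq_sub_of_hasDerivAt
    (fun x _ => hasDerivAt_PhiFGM k x) ((continuous_phiFGM k).intervalIntegrable 0 1)]
  norm_num [PhiFGM]

theorem integral_phiFGM_mul_phiFGM {j k : ℕ} (hj : j ∈ Icc 1 2) (hk : k ∈ Icc 1 2) :
    ∫ x in Set.Icc (0:ℝ) 1, phiFGM j x * phiFGM k x = if j = k then 1 else 0 := by
  rw [integral_Icc_zero_one_eq_intervalIntegral]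
  have h3 : √3 * √3 = 3 := mul_self_sqrt (by norm_num)
  have h5 : √5 * √5 = 5 := mul_self_sqrt (by norm_num)
  rw [mem_Icc] at hj hk
  obtain rfl | rfl : j = 1 ∨ j = 2 := by omega
  all_goals obtain rfl | rfl : k = 1 ∨ k = 2 := by omega
  all_goals
    simp (disch := apply Continuous.intervalIntegrable; fun_prop) [phiFGM, mul_sub, sub_mul,
      mul_add, add_mul, intervalIntegral.integral_add, intervalIntegral.integral_sub,
      intervalIntegral.integral_const_mul, intervalIntegral.integral_mul_const, integral_pow]
    ring_nf
    norm_num [h3, h5] <;> ring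

theorem abs_phiFGM_one_le {x : ℝ} (hx : x ∈ Set.Icc (0:ℝ) 1) : |phiFGM 1 x| ≤ √3 := by
  obtain ⟨h0, h1⟩ := hx
  have : |2 * x - 1| ≤ 1 := abs_le.2 ⟨by linarith, by linarith⟩
  rw [phiFGM, if_pos rfl, abs_mul, abs_of_nonneg (sqrt_nonneg 3)]
  exact mul_le_of_le_one_right (sqrt_nonneg 3) this

theorem abs_phiFGM_two_le {x : ℝ} (hx : x ∈ Set.Icc (0:ℝ) 1) : |phiFGM 2 x| ≤ √5 := by
  obtain ⟨h0, h1⟩ := hx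
  have : |6 * x ^ 2 - 6 * x + 1| ≤ 1 := abs_le.2 ⟨by nlinarith, by nlinarith⟩
  rw [phiFGM, if_neg (by norm_num), abs_mul, abs_of_nonneg (sqrt_nonneg 5)]
  exact mul_le_of_le_one_right (sqrt_nonneg 5) this

theorem phiFGM_of_ne_one {k : ℕ} (hk : k ≠ 1) (x : ℝ) : phiFGM k x = phiFGM 2 x := by
  simp [phiFGM, hk]

theorem abs_phiFGM_le (k : ℕ) {x : ℝ} (hx : x ∈ Set.Icc (0:ℝ) 1) : |phiFGM k x| ≤ √5 := by
  by_cases hk : k = 1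
  · subst hk
    exact (abs_phiFGM_one_le hx).trans (sqrt_le_sqrt (by norm_num))
  · rw [phiFGM_of_ne_one hk]
    exact abs_phiFGM_two_le hx

theorem abs_prod_le_pow_card {ι : Type*} {s : Finset ι} {f : ι → ℝ} {B : ℝ}
    (h : ∀ i ∈ s, |f i| ≤ B) : |∏ i ∈ s, f i| ≤ B ^ s.card := by
  rw [abs_prod, ← prod_const]
  exact prod_le_prod (fun i _ => abs_nonneg _) h

theorem fgmDensity_nonneg {d : ℕ} {lam : ℕ → Finset (Fin d) → ℝ} (hlam : fgmAdmissible d lam)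
    {u : Fin d → ℝ} (hu : ∀ i, u i ∈ Set.Icc (0:ℝ) 1) : 0 ≤ fgmDensity d lam u := by
  have hterm : ∀ M : Finset (Fin d),
      |lam 1 M * ∏ m ∈ M, phiFGM 1 (u m) + lam 2 M * ∏ m ∈ M, phiFGM 2 (u m)|
        ≤ √3 ^ M.card * |lam 1 M| + √5 ^ M.card * |lam 2 M| := by
    intro M
    refine (abs_add_le _ _).trans ?_
    rw [abs_mul, abs_mul, mul_comm |lam 1 M|, mul_comm |lam 2 M|]
    gcongr
    · exact abs_prod_le_pow_card fun m _ => abs_phiFGM_one_le (hu m)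
    · exact abs_prod_le_pow_card fun m _ => abs_phiFGM_two_le (hu m)
  have hsum := (abs_sum_le_sum_abs _ _).trans ((sum_le_sum fun M _ => hterm M).trans hlam)
  rw [sum_add_distrib] at hsum
  rw [fgmDensity, show Icc 1 2 = ({1, 2} : Finset ℕ) from rfl, sum_pair (by norm_num)]
  linarith [(abs_le.1 hsum).1]

theorem measurable_prod_phiFGM {ι : Type*} (k : ℕ) (S : Finset ι) :
    Measurable fun u : ι → ℝ => ∏ m ∈ S, phiFGM k (u m) :=
  Finset.measurable_prod _ fun m _ => (continuous_phiFGM k).measurable.comp (measurable_pi_apply m)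

theorem integrable_prod_phiFGM_mul_prod_phiFGM {ι : Type*} {μ : Measure (ι → ℝ)}
    [IsFiniteMeasure μ] (hμ : ∀ᵐ u ∂μ, ∀ i, u i ∈ Set.Icc (0:ℝ) 1) (j k : ℕ) (S T : Finset ι) :
    Integrable (fun u => (∏ m ∈ S, phiFGM j (u m)) * ∏ m ∈ T, phiFGM k (u m)) μ := by
  refine Integrable.of_bound
    ((measurable_prod_phiFGM j S).mul (measurable_prod_phiFGM k T)).aestronglyMeasurable
    (√5 ^ S.card * √5 ^ T.card) ?_
  filter_upwards [hμ] with u hu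
  rw [norm_mul]
  exact mul_le_mul (abs_prod_le_pow_card fun m _ => abs_phiFGM_le j (hu m))
    (abs_prod_le_pow_card fun m _ => abs_phiFGM_le k (hu m)) (norm_nonneg _) (by positivity)

theorem integral_fgmMeasure_eq_integral_fgmDensity_mul {d : ℕ} {lam : ℕ → Finset (Fin d) → ℝ}
    (hlam : fgmAdmissible d lam) (g : (Fin d → ℝ) → ℝ) :
    ∫ u, g u ∂fgmMeasure d lam
      = ∫ u, fgmDensity d lam u * g u ∂Measure.pi fun _ => volume.restrict (Set.Icc (0:ℝ) 1) := by
  have hc : Measurable (fgmDensity d lam) := by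
    unfold fgmDensity
    exact measurable_const.add <| Finset.measurable_sum _ fun k _ =>
      Finset.measurable_sum _ fun M _ => (measurable_prod_phiFGM k M).const_mul _
  rw [fgmMeasure, integral_withDensity_eq_integral_toReal_smul hc.ennreal_ofReal
    (ae_of_all _ fun _ => ENNReal.ofReal_lt_top)]
  refine integral_congr_ae ?_
  filter_upwards [ae_forall_mem_of_pi_restrict _ measurableSet_Icc] with u hu
  rw [ENNReal.toReal_ofReal (fgmDensity_nonneg hlam hu), smul_eq_mul]

theorem integral_pi_prod_phiFGM_mul_prod_phiFGM {ι : Type*} [Fintype ι] [DecidableEq ι]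
    {j k : ℕ} (hj : j ∈ Icc 1 2) (hk : k ∈ Icc 1 2) (S : Finset ι) {T : Finset ι}
    (hT : T.Nonempty) :
    ∫ u, (∏ m ∈ S, phiFGM j (u m)) * ∏ m ∈ T, phiFGM k (u m)
        ∂Measure.pi (fun _ => volume.restrict (Set.Icc (0:ℝ) 1))
      = if S = T ∧ j = k then 1 else 0 := by
  rw [integral_pi_prod_mul_prod _ (integral_phiFGM j) (integral_phiFGM k),
    integral_phiFGM_mul_phiFGM hj hk]
  by_cases hST : S = T <;> by_cases hjk : j = k <;> simp [hST, hjk, hT.ne_empty]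

theorem integral_prod_phiFGM_fgmMeasure {d : ℕ} {lam : ℕ → Finset (Fin d) → ℝ}
    (hlam : fgmAdmissible d lam) {k : ℕ} (hk : k ∈ Icc 1 2) {M : Finset (Fin d)}
    (hM : 2 ≤ M.card) :
    ∫ u, ∏ m ∈ M, phiFGM k (u m) ∂fgmMeasure d lam = lam k M := by
  classical
  set μ := Measure.pi fun _ : Fin d => volume.restrict (Set.Icc (0:ℝ) 1)
  set P : ℕ → Finset (Fin d) → (Fin d → ℝ) → ℝ := fun j S u => ∏ m ∈ S, phiFGM j (u m)
  set params := (univ : Finset (Finset (Fin d))).filter fun S => 2 ≤ S.card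
  have hMne : M.Nonempty := card_pos.1 (by omega)
  have hMparams : M ∈ params := by simp [params, hM]
  have hint : ∀ j S, Integrable (fun u => P j S u * P k M u) μ := fun j S =>
    integrable_prod_phiFGM_mul_prod_phiFGM
      (ae_forall_mem_of_pi_restrict _ measurableSet_Icc) j k S M
  have hint_sum : ∀ j, Integrable (fun u => ∑ S ∈ params, lam j S * (P j S u * P k M u)) μ :=
    fun j => integrable_finsetSum _ fun S _ => (hint j S).const_mul _
  have horth : ∀ j ∈ Icc 1 2, ∀ S, ∫ u, P j S u * P k M u ∂μ = if S = M ∧ j = k then 1 else 0 :=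
    fun j hj S => integral_pi_prod_phiFGM_mul_prod_phiFGM hj hk S hMne
  have hcentred : ∫ u, P k M u ∂μ = 0 := by
    simpa [P, hMne.ne_empty.symm] using horth k hk ∅
  have hcoeff : ∀ j ∈ Icc 1 2, ∫ u, ∑ S ∈ params, lam j S * (P j S u * P k M u) ∂μ
      = if j = k then lam k M else 0 := by
    intro j hj
    rw [integral_finsetSum _ fun S _ => (hint j S).const_mul _]
    simp_rw [integral_const_mul, horth j hj]
    by_cases hjk : j = k <;> simp [hjk, hMparams]
  have hexpand : ∀ u, fgmDensity d lam u * P k M u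
      = P k M u + ∑ j ∈ Icc 1 2, ∑ S ∈ params, lam j S * (P j S u * P k M u) := by
    intro u
    simp only [fgmDensity, add_mul, one_mul, sum_mul, mul_assoc, P, params, powerset_univ]
  rw [integral_fgmMeasure_eq_integral_fgmDensity_mul hlam, integral_congr_ae (ae_of_all _ hexpand),
    integral_add (hint k ∅ |>.congr (ae_of_all _ fun u => by simp [P]))
      (integrable_finsetSum _ fun j _ => hint_sum j),
    hcentred, zero_add, integral_finsetSum _ fun j _ => hint_sum j, sum_congr rfl hcoeff,
    sum_ite_eq', if_pos hk]

theorem ae_forall_mem_fgmMeasure (d : ℕ) (lam : ℕ → Finset (Fin d) → ℝ) :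
    ∀ᵐ u ∂fgmMeasure d lam, ∀ i, u i ∈ Set.Icc (0:ℝ) 1 :=
  (withDensity_absolutelyContinuous _ _).ae_le (ae_forall_mem_of_pi_restrict _ measurableSet_Icc)

theorem tendsto_measure_le_abs_average_sub_integral {Ω : Type*} [MeasurableSpace Ω]
    {μ : Measure Ω} [IsFiniteMeasure μ] {X : ℕ → Ω → ℝ} (hint : Integrable (X 0) μ)
    (hindep : Pairwise (Function.onFun (IndepFun · · μ) X))
    (hident : ∀ i, IdentDistrib (X i) (X 0) μ μ) {ε : ℝ} (hε : 0 < ε) :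
    Filter.Tendsto
      (fun n : ℕ => μ {ω | ε ≤ |(1 / (n : ℝ)) * ∑ i ∈ range n, X i ω - ∫ ω, X 0 ω ∂μ|})
      Filter.atTop (nhds 0) := by
  have hmeas : ∀ n : ℕ, AEStronglyMeasurable (fun ω => (n : ℝ)⁻¹ • ∑ i ∈ range n, X i ω) μ :=
    fun n => ((Finset.aemeasurable_fun_sum _ fun i _ => (hident i).aemeasurable_fst).fun_const_smul
      _).aestronglyMeasurable
  have := tendstoInMeasure_iff_dist.1
    (tendstoInMeasure_of_tendsto_ae hmeas (strong_law_ae X hint hindep hident)) ε hε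
  simpa [Real.dist_eq] using this

theorem stmt_11_general {Ω : Type*} [MeasurableSpace Ω] (Pr : Measure Ω) [IsProbabilityMeasure Pr]
    (d : ℕ) (lam : ℕ → Finset (Fin d) → ℝ) (hlam : fgmAdmissible d lam)
    (U : ℕ → Ω → (Fin d → ℝ)) (hmeas : ∀ i, Measurable (U i))
    (hdist : ∀ i, Measure.map (U i) Pr = fgmMeasure d lam)
    (hindep : ProbabilityTheory.iIndepFun U Pr)
    (k : ℕ) (hk : k ∈ ({1, 2} : Set ℕ)) (M : Finset (Fin d)) (hM : 2 ≤ M.card) :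
    ∀ ε : ℝ, 0 < ε →
      Filter.Tendsto
        (fun n : ℕ =>
          Pr {ω | ε ≤
            |(1 / (n : ℝ)) * ∑ i ∈ Finset.range n, ∏ m ∈ M, phiFGM k (U i ω m) - lam k M|})
        Filter.atTop (nhds 0) := by
  intro ε hε
  set g : (Fin d → ℝ) → ℝ := fun u => ∏ m ∈ M, phiFGM k (u m)
  have hg : Measurable g := measurable_prod_phiFGM k M
  have hk' : k ∈ Icc 1 2 := by rcases hk with rfl | rfl <;> simp
  have hident : ∀ i, IdentDistrib (g ∘ U i) (g ∘ U 0) Pr Pr := fun i =>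
    IdentDistrib.comp ⟨(hmeas i).aemeasurable, (hmeas 0).aemeasurable, by rw [hdist i, hdist 0]⟩ hg
  have hint : Integrable (g ∘ U 0) Pr := by
    refine Integrable.of_bound (hg.comp (hmeas 0)).aestronglyMeasurable (√5 ^ M.card) ?_
    have hcube := ae_of_ae_map (hmeas 0).aemeasurable (hdist 0 ▸ ae_forall_mem_fgmMeasure d lam)
    filter_upwards [hcube] with ω hω
    exact abs_prod_le_pow_card fun m _ => abs_phiFGM_le k (hω m)
  have hmean : ∫ ω, g (U 0 ω) ∂Pr = lam k M := by
    rw [← integral_map (hmeas 0).aemeasurable hg.aestronglyMeasurable, hdist 0]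
    exact integral_prod_phiFGM_fgmMeasure hlam hk' hM
  simpa [hmean] using tendsto_measure_le_abs_average_sub_integral (X := fun i => g ∘ U i) hint
    (fun i j hij => (hindep.indepFun hij).comp hg hg) hident hε

theorem stmt_11 {Ω : Type*} [MeasurableSpace Ω] (Pr : Measure Ω) [IsProbabilityMeasure Pr]
    (d : ℕ) (hd : 2 ≤ d) (lam : ℕ → Finset (Fin d) → ℝ) (hlam : fgmAdmissible d lam)
    (U : ℕ → Ω → (Fin d → ℝ)) (hmeas : ∀ i, Measurable (U i))
    (hdist : ∀ i, Measure.map (U i) Pr = fgmMeasure d lam)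
    (hindep : ProbabilityTheory.iIndepFun U Pr)
    (k : ℕ) (hk : k ∈ ({1, 2} : Set ℕ)) (M : Finset (Fin d)) (hM : 2 ≤ M.card) :
    ∀ ε : ℝ, 0 < ε →
      Filter.Tendsto
        (fun n : ℕ =>
          Pr {ω | ε ≤
            |(1 / (n : ℝ)) * ∑ i ∈ Finset.range n, ∏ m ∈ M, phiFGM k (U i ω m) - lam k M|})
        Filter.atTop (nhds 0) :=
  stmt_11_general Pr d lam hlam U hmeas hdist hindep k hk M hM
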